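/- arXiv:2509.26337 — 6 statements merged into one kernel-verified Lean document; each statement's English description precedes it below -/
import Mathlib

section
/- Let a > 0, α ∈ (0,1], η > 0. Define the one-dimensional LocalMuon recursion with two clients and loss functions f₁(x) = x²/2 and f₂(x) = (x+a)²/2, global loss f(x) = (f₁(x)+f₂(x))/2, initialized at x⁽⁰⁾ = −a/4 with momenta m₁⁽⁰⁾ = m₂⁽⁰⁾ = 0, and updated by m₁⁽ʳ⁺¹⁾ = (1−α)m₁⁽ʳ⁾ + α·x⁽ʳ⁾, m₂⁽ʳ⁺¹⁾ = (1−α)m₂⁽ʳ⁾ + α·(x⁽ʳ⁾+a), x⁽ʳ⁺¹⁾ = x⁽ʳ⁾ − (η/2)·(sign(m₁⁽ʳ⁺¹⁾) + sign(m₂⁽ʳ⁺¹⁾)). Then for every r ≥ 0 one has x⁽ʳ⁾ = −a/4, and the global gradient satisfies (f′(x⁽ʳ⁾))² = a²/16 = ζ⋆²/4, where ζ⋆² := (1/2)·((f₁′(x⋆))² + (f₂′(x⋆))²) = a²/4 and x⋆ = −a/2 is the unique minimizer of f. In particular, the iterates never converge to a stationary point of f. -/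
/-!
At `x = -a/4` the two client gradients are `-a/4 < 0` and `3a/4 > 0`. Started from zero, each
momentum is its (constant) gradient times `1 - (1-α)^r > 0`, so the two sign steps are `+η/2` and
`-η/2` and cancel: the iterate never moves, while `f'(-a/4) = a/4 ≠ 0`.
-/

theorem Real.sign_mul_of_pos {r c : ℝ} (hc : 0 < c) : Real.sign (r * c) = Real.sign r := by
  rcases lt_trichotomy r 0 with hr | rfl | hr
  · rw [Real.sign_of_neg hr, Real.sign_of_neg (mul_neg_of_neg_of_pos hr hc)]
  · rw [zero_mul]
  · rw [Real.sign_of_pos hr, Real.sign_of_pos (mul_pos hr hc)]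

theorem one_sub_one_sub_pow_pos {α : ℝ} (hα : α ∈ Set.Ioc (0 : ℝ) 1) {n : ℕ} (hn : n ≠ 0) :
    0 < 1 - (1 - α) ^ n := by
  have : (1 - α) ^ n < 1 := pow_lt_one₀ (by linarith [hα.2]) (by linarith [hα.1]) hn
  linarith

theorem signMomentum_eq_of_sign_add_sign_eq_zero {α η x₀ : ℝ} {g₁ g₂ : ℝ → ℝ}
    (hα : α ∈ Set.Ioc (0 : ℝ) 1) (hopp : Real.sign (g₁ x₀) + Real.sign (g₂ x₀) = 0)
    {x m₁ m₂ : ℕ → ℝ} (hx0 : x 0 = x₀) (hm₁0 : m₁ 0 = 0) (hm₂0 : m₂ 0 = 0)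
    (hm₁ : ∀ r, m₁ (r + 1) = (1 - α) * m₁ r + α * g₁ (x r))
    (hm₂ : ∀ r, m₂ (r + 1) = (1 - α) * m₂ r + α * g₂ (x r))
    (hx : ∀ r, x (r + 1) =
      x r - (η / 2) * (Real.sign (m₁ (r + 1)) + Real.sign (m₂ (r + 1)))) (r : ℕ) :
    x r = x₀ := by
  suffices h : ∀ r, x r = x₀ ∧ m₁ r = g₁ x₀ * (1 - (1 - α) ^ r) ∧
      m₂ r = g₂ x₀ * (1 - (1 - α) ^ r) from (h r).1
  intro r
  induction r with
  | zero => simp [hx0, hm₁0, hm₂0]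
  | succ n ih =>
    obtain ⟨hxn, hm₁n, hm₂n⟩ := ih
    have hm₁' : m₁ (n + 1) = g₁ x₀ * (1 - (1 - α) ^ (n + 1)) := by
      rw [hm₁, hm₁n, hxn]; ring
    have hm₂' : m₂ (n + 1) = g₂ x₀ * (1 - (1 - α) ^ (n + 1)) := by
      rw [hm₂, hm₂n, hxn]; ring
    have hpos := one_sub_one_sub_pow_pos hα n.succ_ne_zero
    refine ⟨?_, hm₁', hm₂'⟩
    rw [hx, hm₁', hm₂', Real.sign_mul_of_pos hpos, Real.sign_mul_of_pos hpos, hopp, hxn]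
    ring

theorem hasDerivAt_add_sq_div_two (b t : ℝ) :
    HasDerivAt (fun s => (s + b) ^ 2 / 2) (t + b) t := by
  simpa using (((hasDerivAt_id t).add_const b).pow 2).div_const 2

theorem isMinOn_univ_iff_of_eq_add_mul_sq {g : ℝ → ℝ} {k d c : ℝ} (hd : 0 < d)
    (hg : ∀ t, g t = k + d * (t - c) ^ 2) (y : ℝ) : IsMinOn g Set.univ y ↔ y = c := by
  constructor
  · intro hy
    have hle : g y ≤ g c := hy (Set.mem_univ c)
    rw [hg, hg, sub_self] at hle
    have : (y - c) ^ 2 = 0 := le_antisymm (by nlinarith) (sq_nonneg _)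
    exact sub_eq_zero.mp (pow_eq_zero_iff two_ne_zero |>.mp this)
  · rintro rfl t -
    show g y ≤ g t
    rw [hg, hg, sub_self]
    nlinarith [mul_nonneg hd.le (sq_nonneg (t - y))]

theorem localMuon_lower_bound_general (a α η : ℝ) (ha : 0 < a) (hα : α ∈ Set.Ioc (0 : ℝ) 1)
    (x m₁ m₂ : ℕ → ℝ) (f f₁ f₂ : ℝ → ℝ)
    (hf₁ : ∀ t, f₁ t = t ^ 2 / 2) (hf₂ : ∀ t, f₂ t = (t + a) ^ 2 / 2)
    (hf : ∀ t, f t = (f₁ t + f₂ t) / 2)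
    (hx0 : x 0 = -a / 4) (hm₁0 : m₁ 0 = 0) (hm₂0 : m₂ 0 = 0)
    (hm₁ : ∀ r, m₁ (r + 1) = (1 - α) * m₁ r + α * x r)
    (hm₂ : ∀ r, m₂ (r + 1) = (1 - α) * m₂ r + α * (x r + a))
    (hx : ∀ r, x (r + 1) =
      x r - (η / 2) * (Real.sign (m₁ (r + 1)) + Real.sign (m₂ (r + 1)))) :
    (∀ r, x r = -a / 4) ∧
    (∀ r, (deriv f (x r)) ^ 2 = a ^ 2 / 16) ∧
    a ^ 2 / 16 = ((1 / 2) * ((deriv f₁ (-a / 2)) ^ 2 + (deriv f₂ (-a / 2)) ^ 2)) / 4 ∧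
    (1 / 2) * ((deriv f₁ (-a / 2)) ^ 2 + (deriv f₂ (-a / 2)) ^ 2) = a ^ 2 / 4 ∧
    IsMinOn f Set.univ (-a / 2) ∧
    (∀ y, IsMinOn f Set.univ y → y = -a / 2) ∧
    (∀ r, deriv f (x r) ≠ 0) := by
  have hopp : Real.sign (-a / 4) + Real.sign (-a / 4 + a) = 0 := by
    rw [Real.sign_of_neg (by linarith), Real.sign_of_pos (by linarith)]; norm_num
  have hstuck : ∀ r, x r = -a / 4 := signMomentum_eq_of_sign_add_sign_eq_zero
    (g₁ := fun t => t) (g₂ := fun t => t + a) hα hopp hx0 hm₁0 hm₂0 hm₁ hm₂ hx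
  have hf₁' (t : ℝ) : HasDerivAt f₁ t t := by
    simpa [funext hf₁] using hasDerivAt_add_sq_div_two 0 t
  have hf₂' (t : ℝ) : HasDerivAt f₂ (t + a) t := by
    simpa [funext hf₂] using hasDerivAt_add_sq_div_two a t
  have hf' (t : ℝ) : HasDerivAt f ((t + (t + a)) / 2) t := by
    rw [show f = fun t => (f₁ t + f₂ t) / 2 from funext hf]
    exact ((hf₁' t).add (hf₂' t)).div_const 2
  have hmin := isMinOn_univ_iff_of_eq_add_mul_sq (g := f) (k := a ^ 2 / 8) (c := -a / 2)
    one_half_pos (fun t => by rw [hf, hf₁, hf₂]; ring)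
  refine ⟨hstuck, ?_⟩
  simp only [(hf₁' _).deriv, (hf₂' _).deriv, (hf' _).deriv, hstuck]
  refine ⟨fun _ => by ring, by ring, by ring, (hmin _).mpr rfl, fun y => (hmin y).mp,
    fun _ => by linarith⟩

theorem localMuon_lower_bound (a α η : ℝ) (ha : 0 < a) (hα : α ∈ Set.Ioc (0 : ℝ) 1)
    (hη : 0 < η) (x m₁ m₂ : ℕ → ℝ) (f f₁ f₂ : ℝ → ℝ)
    (hf₁ : ∀ t, f₁ t = t ^ 2 / 2) (hf₂ : ∀ t, f₂ t = (t + a) ^ 2 / 2)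
    (hf : ∀ t, f t = (f₁ t + f₂ t) / 2)
    (hx0 : x 0 = -a / 4) (hm₁0 : m₁ 0 = 0) (hm₂0 : m₂ 0 = 0)
    (hm₁ : ∀ r, m₁ (r + 1) = (1 - α) * m₁ r + α * x r)
    (hm₂ : ∀ r, m₂ (r + 1) = (1 - α) * m₂ r + α * (x r + a))
    (hx : ∀ r, x (r + 1) =
      x r - (η / 2) * (Real.sign (m₁ (r + 1)) + Real.sign (m₂ (r + 1)))) :
    (∀ r, x r = -a / 4) ∧
    (∀ r, (deriv f (x r)) ^ 2 = a ^ 2 / 16) ∧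
    a ^ 2 / 16 = ((1 / 2) * ((deriv f₁ (-a / 2)) ^ 2 + (deriv f₂ (-a / 2)) ^ 2)) / 4 ∧
    (1 / 2) * ((deriv f₁ (-a / 2)) ^ 2 + (deriv f₂ (-a / 2)) ^ 2) = a ^ 2 / 4 ∧
    IsMinOn f Set.univ (-a / 2) ∧
    (∀ y, IsMinOn f Set.univ y → y = -a / 2) ∧
    (∀ r, deriv f (x r) ≠ 0) :=
  localMuon_lower_bound_general a α η ha hα x m₁ m₂ f f₁ f₂ hf₁ hf₂ hf hx0 hm₁0 hm₂0 hm₁ hm₂ hx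
end

section
/- Let φ(x) := (15/8)·x − (5/4)·x³ + (3/8)·x⁵. Then for every x ∈ [0, 1]: 0 ≤ 1 − φ(x) ≤ (1 − x)^{3/2}. -/
/-!
Since φ(1) = 1 and φ'(x) = (15/8)(1 - x²)² vanishes to second order at 1, the polynomial 1 - φ(x)
factors as (1 - x)³ q(x) with q(x) = (8 + 9x + 3x²)/8 > 0; this gives nonnegativity. Squaring, the
upper bound becomes (1 - x)³ q(x)² ≤ 1, a polynomial inequality on [0, 1] with equality at x = 0.
-/

lemma Real.le_rpow_natCast_div_two_of_sq_le {a t : ℝ} {n : ℕ} (ht : 0 ≤ t) (h : a ^ 2 ≤ t ^ n) :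
    a ≤ t ^ ((n : ℝ) / 2) := by
  rw [div_eq_mul_one_div, Real.rpow_mul ht, Real.rpow_natCast, ← Real.sqrt_eq_rpow]
  exact Real.le_sqrt_of_sq_le h

lemma one_sub_newtonSchulz_eq (x : ℝ) :
    1 - ((15/8) * x - (5/4) * x^3 + (3/8) * x^5) = (1 - x) ^ 3 * ((8 + 9 * x + 3 * x ^ 2) / 8) := by
  ring

lemma one_sub_pow_three_mul_sq_le_one {x : ℝ} (h0 : 0 ≤ x) (h1 : x ≤ 1) :
    (1 - x) ^ 3 * ((8 + 9 * x + 3 * x ^ 2) / 8) ^ 2 ≤ 1 := by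
  have hx2 : x ^ 2 ≤ x := by nlinarith
  have hx3 : x ^ 3 ≤ x := by nlinarith [pow_le_one₀ h0 h1 (n := 2)]
  have hx4 : x ^ 4 ≤ x := by nlinarith [pow_le_one₀ h0 h1 (n := 3)]
  -- On [0, 1] the negative terms are dominated via x^k ≤ x, leaving 48 - 20x > 0.
  have hq : 0 ≤ 48 + 111 * x - 35 * x ^ 2 - 90 * x ^ 3 - 6 * x ^ 4 + 27 * x ^ 5 + 9 * x ^ 6 := by
    nlinarith [pow_nonneg h0 5, pow_nonneg h0 6]
  have key : 1 - (1 - x) ^ 3 * ((8 + 9 * x + 3 * x ^ 2) / 8) ^ 2 =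
      x * (48 + 111 * x - 35 * x ^ 2 - 90 * x ^ 3 - 6 * x ^ 4 + 27 * x ^ 5 + 9 * x ^ 6) / 64 := by
    ring
  nlinarith [mul_nonneg h0 hq]

theorem newton_schulz_one_sub_bound (x : ℝ) (hx : x ∈ Set.Icc (0 : ℝ) 1) :
    0 ≤ 1 - ((15/8) * x - (5/4) * x^3 + (3/8) * x^5) ∧
      1 - ((15/8) * x - (5/4) * x^3 + (3/8) * x^5) ≤ (1 - x) ^ ((3 : ℝ) / 2) := by
  obtain ⟨h0, h1⟩ := hx
  have ht : 0 ≤ 1 - x := sub_nonneg.mpr h1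
  rw [one_sub_newtonSchulz_eq]
  refine ⟨mul_nonneg (pow_nonneg ht 3) (by positivity), ?_⟩
  have hsq : ((1 - x) ^ 3 * ((8 + 9 * x + 3 * x ^ 2) / 8)) ^ 2 ≤ (1 - x) ^ 3 :=
    calc ((1 - x) ^ 3 * ((8 + 9 * x + 3 * x ^ 2) / 8)) ^ 2
        = (1 - x) ^ 3 * ((1 - x) ^ 3 * ((8 + 9 * x + 3 * x ^ 2) / 8) ^ 2) := by ring
      _ ≤ (1 - x) ^ 3 :=
        mul_le_of_le_one_right (pow_nonneg ht 3) (one_sub_pow_three_mul_sq_le_one h0 h1)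
  exact_mod_cast Real.le_rpow_natCast_div_two_of_sq_le ht hsq
end

section
/- Let φ(x) := (15/8)·x − (5/4)·x³ + (3/8)·x⁵ and let φ^{[T]} denote the T-fold composition of φ (with φ^{[0]} the identity). Then for every natural number T and every x ∈ [0, 1]: 0 ≤ 1 − φ^{[T]}(x) ≤ (1 − x)^{(3/2)^T}. -/
/-!
Writing `φ` for the Newton–Schulz polynomial, `1 - φ y = (1 - y)³ (3y² + 9y + 8) / 8`, so `φ` maps
`[0, 1]` into itself, and on `[0, 1]` one step turns the error `1 - y` into at most
`(1 - y) ^ (3/2)` because `(1 - φ y)² ≤ (1 - y)³`. Iterating the step multiplies the exponents.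
-/

open Set

noncomputable def newtonSchulz (t : ℝ) : ℝ := (15/8) * t - (5/4) * t^3 + (3/8) * t^5

lemma one_sub_newtonSchulz (y : ℝ) :
    1 - newtonSchulz y = (1 - y)^3 * (3 * y^2 + 9 * y + 8) / 8 := by
  unfold newtonSchulz; ring

lemma mapsTo_newtonSchulz_Icc : MapsTo newtonSchulz (Icc 0 1) (Icc 0 1) := by
  rintro y ⟨hy0, hy1⟩
  have h1y : 0 ≤ 1 - y := by linarith
  have hfactor : 0 ≤ (1 - y)^3 * (3 * y^2 + 9 * y + 8) / 8 := by positivity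
  have hy2 : y^2 ≤ 1 := by nlinarith
  constructor
  · have : 0 ≤ y * (15 - 10 * y^2 + 3 * y^4) := mul_nonneg hy0 (by nlinarith)
    unfold newtonSchulz; linarith
  · linarith [one_sub_newtonSchulz y]

lemma one_sub_newtonSchulz_sq_le {y : ℝ} (hy : y ∈ Icc (0 : ℝ) 1) :
    (1 - newtonSchulz y)^2 ≤ (1 - y)^3 := by
  obtain ⟨hy0, hy1⟩ := hy
  set q := 48 + 111 * y - 35 * y^2 - 90 * y^3 - 6 * y^4 + 27 * y^5 + 9 * y^6
  have hgap : (1 - y)^3 - (1 - newtonSchulz y)^2 = (1 - y)^3 * (y * q) / 64 := by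
    unfold newtonSchulz; ring
  -- On `[0, 1]` each `y ^ k` with `k ≥ 1` is at most `y`, so `q ≥ 48 - 20 y > 0`.
  have hq : 0 ≤ q := by
    have h2 : y^2 ≤ y := by nlinarith
    have h3 : y^3 ≤ y := by nlinarith
    have h4 : y^4 ≤ y := by nlinarith
    have : 0 ≤ 27 * y^5 + 9 * y^6 := by positivity
    linarith
  have h1y : 0 ≤ 1 - y := by linarith
  have : 0 ≤ (1 - y)^3 * (y * q) / 64 := by positivity
  linarith

lemma one_sub_newtonSchulz_le_rpow {y : ℝ} (hy : y ∈ Icc (0 : ℝ) 1) :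
    1 - newtonSchulz y ≤ (1 - y) ^ ((3 : ℝ) / 2) := by
  have h1y : 0 ≤ 1 - y := by linarith [hy.2]
  have hsq : ((1 - y) ^ ((3 : ℝ) / 2))^2 = (1 - y)^3 := by
    rw [← Real.rpow_natCast _ 2, ← Real.rpow_mul h1y]; norm_num
  have hφ : 0 ≤ 1 - newtonSchulz y := by linarith [(mapsTo_newtonSchulz_Icc hy).2]
  refine (pow_le_pow_iff_left₀ hφ (Real.rpow_nonneg h1y _) two_ne_zero).1 ?_
  rw [hsq]
  exact one_sub_newtonSchulz_sq_le hy

lemma one_sub_iterate_le_rpow {f : ℝ → ℝ} {p : ℝ} (hp : 0 ≤ p)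
    (hf : MapsTo f (Icc 0 1) (Icc 0 1))
    (hstep : ∀ y ∈ Icc (0 : ℝ) 1, 1 - f y ≤ (1 - y) ^ p) (T : ℕ) :
    ∀ x ∈ Icc (0 : ℝ) 1, 1 - f^[T] x ≤ (1 - x) ^ (p ^ T) := by
  induction T with
  | zero => intro x _; simp
  | succ T ih =>
    intro x hx
    have h1x : 0 ≤ 1 - x := by linarith [hx.2]
    have h1fx : 0 ≤ 1 - f x := by linarith [(hf hx).2]
    calc 1 - f^[T + 1] x = 1 - f^[T] (f x) := by rw [Function.iterate_succ_apply]
      _ ≤ (1 - f x) ^ (p ^ T) := ih (f x) (hf hx)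
      _ ≤ ((1 - x) ^ p) ^ (p ^ T) := Real.rpow_le_rpow h1fx (hstep x hx) (by positivity)
      _ = (1 - x) ^ (p ^ (T + 1)) := by rw [← Real.rpow_mul h1x, pow_succ, mul_comm]

theorem newton_schulz_iterated_bound (T : ℕ) (x : ℝ) (hx : x ∈ Set.Icc (0 : ℝ) 1) :
    0 ≤ 1 - (fun t : ℝ => (15/8) * t - (5/4) * t^3 + (3/8) * t^5)^[T] x ∧
      1 - (fun t : ℝ => (15/8) * t - (5/4) * t^3 + (3/8) * t^5)^[T] x
        ≤ (1 - x) ^ (((3 : ℝ) / 2) ^ T) := by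
  change 0 ≤ 1 - newtonSchulz^[T] x ∧ 1 - newtonSchulz^[T] x ≤ (1 - x) ^ (((3 : ℝ) / 2) ^ T)
  exact ⟨sub_nonneg.2 (mapsTo_newtonSchulz_Icc.iterate T hx).2,
    one_sub_iterate_le_rpow (by norm_num) mapsTo_newtonSchulz_Icc
      (fun _ hy => one_sub_newtonSchulz_le_rpow hy) T x hx⟩
end

section
/- Let κ ∈ (0, 1) and let c ≥ 1 be a real number. Define p := 1 + log(1 − (1−κ)^c) / log κ. Then for every u ∈ [κ, 1]: 1 − (1−u)^c ≥ u^{p−1}. -/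
open Real Set

/-!
Put `t = log u` and `g t = log (1 - (1 - exp t) ^ c)`. Then `g 0 = 0`, and the claim says that on
`[log κ, 0]` the graph of `g` lies above its chord, whose slope is `p - 1`. This holds because
`g` is concave on `t ≤ 0`: `g' t` is the elasticity `u D'(u) / D(u)` of `D(u) = 1 - (1 - u) ^ c`
at `u = exp t`, and the elasticity decreases in `u`, its derivative having the sign of
`1 - c u - (1 - u) ^ c ≤ 0` (Bernoulli).
-/

theorem ConcaveOn.div_mul_le_of_map_zero {𝕜 : Type*} [Field 𝕜] [LinearOrder 𝕜]
    [IsStrictOrderedRing 𝕜] {s : Set 𝕜} {g : 𝕜 → 𝕜} (hg : ConcaveOn 𝕜 s g) (h0 : 0 ∈ s)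
    (hg0 : g 0 = 0) {a t : 𝕜} (ha : a ∈ s) (hat : a ≤ t) (ht : t ≤ 0) :
    g a / a * t ≤ g t := by
  rcases ht.eq_or_lt with rfl | ht
  · simp [hg0]
  have hts : t ∈ s := hg.1.ordConnected.out ha h0 ⟨hat, ht.le⟩
  have hslope := hg.antitoneOn_slope_lt h0 ⟨ha, hat.trans_lt ht⟩ ⟨hts, ht⟩ hat
  simp only [slope_def_field, hg0, sub_zero] at hslope
  exact (div_le_iff_of_neg ht).1 hslope

theorem one_sub_one_sub_rpow_pos {c u : ℝ} (hc : 0 < c) (hu₀ : 0 < u) (hu₁ : u ≤ 1) :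
    0 < 1 - (1 - u) ^ c := by
  rcases hu₁.eq_or_lt with rfl | hu₁
  · simp [zero_rpow hc.ne']
  · linarith [rpow_lt_one (x := 1 - u) (by linarith) (by linarith) hc]

theorem hasDerivAt_one_sub_rpow {c u : ℝ} (hu : u ≠ 1) :
    HasDerivAt (fun x : ℝ => (1 - x) ^ c) (-(c * (1 - u) ^ (c - 1))) u := by
  simpa using ((hasDerivAt_id u).const_sub 1).rpow_const (p := c)
    (Or.inl (sub_ne_zero.2 hu.symm))

noncomputable def elasticity (c u : ℝ) : ℝ := c * (1 - u) ^ (c - 1) * u / (1 - (1 - u) ^ c)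

theorem hasDerivAt_elasticity {c u : ℝ} (hc : 0 < c) (hu : u ∈ Ioo (0 : ℝ) 1) :
    HasDerivAt (elasticity c)
      (c * (1 - u) ^ (c - 2) * (1 - c * u - (1 - u) ^ c) / (1 - (1 - u) ^ c) ^ 2) u := by
  have hs : 0 < 1 - u := sub_pos.2 hu.2
  have hN := ((hasDerivAt_one_sub_rpow (c := c - 1) hu.2.ne).const_mul c).mul (hasDerivAt_id u)
  have hD := (hasDerivAt_one_sub_rpow (c := c) hu.2.ne).const_sub 1
  refine (hN.div hD (one_sub_one_sub_rpow_pos hc hu.1 hu.2.le).ne').congr_deriv ?_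
  have h1 : (1 - u) ^ (c - 1) = (1 - u) ^ (c - 2) * (1 - u) := by
    rw [← rpow_add_one hs.ne']; ring_nf
  have h2 : (1 - u) ^ c = (1 - u) ^ (c - 2) * (1 - u) ^ 2 := by
    rw [← rpow_natCast, ← rpow_add hs]; ring_nf
  simp only [Pi.mul_apply, id, h1, h2, show c - 1 - 1 = c - 2 by ring]
  ring

theorem antitoneOn_elasticity {c : ℝ} (hc : 1 ≤ c) : AntitoneOn (elasticity c) (Ioo 0 1) := by
  have hc₀ : 0 < c := by linarith
  refine antitoneOn_of_hasDerivWithinAt_nonpos (convex_Ioo 0 1)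
    (fun u hu => (hasDerivAt_elasticity hc₀ hu).continuousAt.continuousWithinAt)
    (fun u hu => (hasDerivAt_elasticity hc₀ (interior_subset hu)).hasDerivWithinAt) ?_
  intro u hu
  rw [interior_Ioo] at hu
  have bernoulli : 1 + c * -u ≤ (1 + -u) ^ c :=
    one_add_mul_self_le_rpow_one_add (by linarith [hu.2]) hc
  rw [← sub_eq_add_neg] at bernoulli
  have hs : 0 ≤ (1 - u) ^ (c - 2) := rpow_nonneg (by linarith [hu.2]) _
  exact div_nonpos_of_nonpos_of_nonneg
    (mul_nonpos_of_nonneg_of_nonpos (mul_nonneg hc₀.le hs) (by linarith)) (sq_nonneg _)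

theorem hasDerivAt_log_one_sub_one_sub_rpow_exp {c t : ℝ} (hc : 0 < c) (ht : t < 0) :
    HasDerivAt (fun t => log (1 - (1 - exp t) ^ c)) (elasticity c (exp t)) t := by
  have hD := ((hasDerivAt_one_sub_rpow (c := c) (exp_lt_one_iff.2 ht).ne).const_sub 1).comp t
    (hasDerivAt_exp t)
  have hpos := one_sub_one_sub_rpow_pos hc (exp_pos t) (exp_le_one_iff.2 ht.le)
  refine (hD.log hpos.ne').congr_deriv ?_
  simp only [elasticity, Function.comp_apply, neg_neg]

theorem concaveOn_log_one_sub_one_sub_rpow_exp {c : ℝ} (hc : 1 ≤ c) :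
    ConcaveOn ℝ (Iic 0) (fun t => log (1 - (1 - exp t) ^ c)) := by
  have hc₀ : 0 < c := by linarith
  have hderiv := fun t (ht : t ∈ Iio (0 : ℝ)) => hasDerivAt_log_one_sub_one_sub_rpow_exp hc₀ ht
  refine AntitoneOn.concaveOn_of_deriv (convex_Iic 0) ?_ ?_ ?_
  · have hcont : Continuous fun t => 1 - (1 - exp t) ^ c :=
      continuous_const.sub ((continuous_const.sub continuous_exp).rpow_const
        fun _ => Or.inr hc₀.le)
    refine hcont.continuousOn.log fun t ht => ?_
    exact (one_sub_one_sub_rpow_pos hc₀ (exp_pos t) (exp_le_one_iff.2 ht)).ne'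
  · rw [interior_Iic]
    exact fun t ht => (hderiv t ht).differentiableAt.differentiableWithinAt
  · rw [interior_Iic]
    intro a ha b hb hab
    rw [(hderiv a ha).deriv, (hderiv b hb).deriv]
    exact antitoneOn_elasticity hc ⟨exp_pos a, exp_lt_one_iff.2 ha⟩
      ⟨exp_pos b, exp_lt_one_iff.2 hb⟩ (exp_le_exp.2 hab)

theorem one_sub_pow_ge_rpow (κ c : ℝ) (hκ : κ ∈ Set.Ioo (0 : ℝ) 1) (hc : 1 ≤ c)
    (p : ℝ) (hp : p = 1 + Real.log (1 - (1 - κ) ^ c) / Real.log κ) :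
    ∀ u ∈ Set.Icc κ 1, 1 - (1 - u) ^ c ≥ u ^ (p - 1) := by
  rintro u ⟨hκu, hu₁⟩
  have hu₀ : 0 < u := hκ.1.trans_le hκu
  have key := (concaveOn_log_one_sub_one_sub_rpow_exp hc).div_mul_le_of_map_zero
    self_mem_Iic (by simp [zero_rpow (by linarith : c ≠ 0)])
    (log_nonpos hκ.1.le hκ.2.le) (log_le_log hκ.1 hκu) (log_nonpos hu₀.le hu₁)
  simp only [exp_log hκ.1, exp_log hu₀] at key
  calc u ^ (p - 1) = exp (log (1 - (1 - κ) ^ c) / log κ * log u) := by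
        rw [rpow_def_of_pos hu₀, hp]; ring_nf
    _ ≤ exp (log (1 - (1 - u) ^ c)) := exp_le_exp.2 key
    _ = 1 - (1 - u) ^ c := exp_log (one_sub_one_sub_rpow_pos (by linarith) hu₀ hu₁)
end

section
/- Let T be a natural number and set c := (3/2)^T. Let m ≥ 2 be a natural number and let s : Fin m → ℝ satisfy s_i > 0 for all i. Define F := sqrt(Σ_i s_i²), κ := (min_i s_i)/F (so that 0 < κ < 1), and p := 1 + log(1 − (1−κ)^c) / log κ. Then Σ_i s_i · (1 − (1 − s_i/F)^c) ≥ (Σ_i s_i^p)^{1/p}. -/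
/-!
With `x i = s i / F` we have `∑ x i ^ 2 = 1` and `κ ≤ x i ≤ 1`. Put `q = p - 1`, so that
`κ ^ q = 1 - (1 - κ) ^ c`. The function `φ t = log (1 - (1 - exp t) ^ c)` is concave on `t ≤ 0`:
its derivative is `c / (1 + h (exp t))`, where `h y = ((1 - y) ^ (1 - c) - 1) / y` is minus a
secant slope of the convex function `u ↦ u ^ (1 - c)` through `1`, hence increasing in `y`. Since `φ 0 = 0`,
concavity along the chord from `log κ` to `0` gives `x ^ q ≤ 1 - (1 - x) ^ c` for `κ ≤ x ≤ 1`.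
Therefore `∑ s i * (1 - (1 - x i) ^ c) ≥ F * ∑ x i ^ p`, and as `p ≤ 2` forces
`∑ x i ^ p ≥ ∑ x i ^ 2 = 1`, this is at least `F * (∑ x i ^ p) ^ (1 / p) = (∑ s i ^ p) ^ (1 / p)`.
-/

open Real Set

lemma convexOn_rpow_of_nonpos {r : ℝ} (hr : r ≤ 0) : ConvexOn ℝ (Ioi 0) fun x : ℝ ↦ x ^ r := by
  have hdiff : ∀ x ∈ Ioi (0 : ℝ), DifferentiableAt ℝ (fun x : ℝ ↦ x ^ r) x := fun x hx ↦
    differentiableAt_rpow_const_of_ne r (ne_of_gt hx)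
  refine MonotoneOn.convexOn_of_deriv (convex_Ioi 0)
    (fun x hx ↦ (hdiff x hx).continuousAt.continuousWithinAt) ?_ ?_ <;> rw [interior_Ioi]
  · exact fun x hx ↦ (hdiff x hx).differentiableWithinAt
  · intro x hx y _ hxy
    simp only [Real.deriv_rpow_const]
    exact mul_le_mul_of_nonpos_left (rpow_le_rpow_of_nonpos hx hxy (by linarith)) hr

lemma antitoneOn_div_one_add_one_sub_rpow_sub_one_div {c : ℝ} (hc : 1 ≤ c) :
    AntitoneOn (fun y : ℝ ↦ c / (1 + ((1 - y) ^ (1 - c) - 1) / y)) (Ioo 0 1) := by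
  have hconv := convexOn_rpow_of_nonpos (r := 1 - c) (by linarith)
  have hslope : ∀ y : ℝ, ((1 - y) ^ (1 - c) - 1) / y
      = -(((1 - y) ^ (1 - c) - 1 ^ (1 - c)) / ((1 - y) - 1)) := fun y ↦ by
    rw [one_rpow, sub_sub_cancel_left, div_neg, neg_neg]
  have hnonneg : ∀ y ∈ Ioo (0 : ℝ) 1, 0 ≤ ((1 - y) ^ (1 - c) - 1) / y := fun y hy ↦
    div_nonneg (sub_nonneg.2 (one_le_rpow_of_pos_of_le_one_of_nonpos (by linarith [hy.2])
      (by linarith [hy.1]) (by linarith))) hy.1.le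
  intro x hx y hy hxy
  refine div_le_div_of_nonneg_left (by linarith) (by linarith [hnonneg x hx]) ?_
  rw [add_le_add_iff_left, hslope x, hslope y, neg_le_neg_iff]
  exact hconv.secant_mono (a := 1) (by norm_num) (by simp [hy.2]) (by simp [hx.2])
    (by linarith [hy.1]) (by linarith [hx.1]) (by linarith)

lemma one_sub_one_sub_rpow_pos_s13 {c y : ℝ} (hc : 0 < c) (hy0 : 0 < y) (hy1 : y ≤ 1) :
    0 < 1 - (1 - y) ^ c := by
  linarith [rpow_lt_one (sub_nonneg.2 hy1) (sub_lt_self 1 hy0) hc]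

lemma hasDerivAt_log_one_sub_one_sub_exp_rpow {c t : ℝ} (hc : 0 < c) (ht : t < 0) :
    HasDerivAt (fun t ↦ log (1 - (1 - exp t) ^ c))
      (c / (1 + ((1 - exp t) ^ (1 - c) - 1) / exp t)) t := by
  have hu : 0 < 1 - exp t := sub_pos.2 (exp_lt_one_iff.2 ht)
  have hf := one_sub_one_sub_rpow_pos_s13 hc (exp_pos t) (exp_lt_one_iff.2 ht).le
  convert ((((hasDerivAt_exp t).const_sub 1).rpow_const (p := c) (Or.inl hu.ne')).const_sub
    1).log hf.ne' using 1
  have h1 : (1 - exp t) ^ (1 - c) = ((1 - exp t) ^ (c - 1))⁻¹ := by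
    rw [← rpow_neg hu.le, neg_sub]
  have h2 : (1 - exp t) ^ c = (1 - exp t) ^ (c - 1) * (1 - exp t) := by
    rw [← rpow_add_one hu.ne', sub_add_cancel]
  have hv := rpow_pos_of_pos hu (c - 1)
  rw [h2] at hf
  rw [h1, h2]
  generalize (1 - exp t) ^ (c - 1) = v at hv hf ⊢
  have hy := exp_pos t
  have hden : 1 + (v⁻¹ - 1) / exp t = (1 - v * (1 - exp t)) / (v * exp t) := by
    field_simp
    ring
  rw [hden]
  field_simp

lemma concaveOn_log_one_sub_one_sub_exp_rpow {c : ℝ} (hc : 1 ≤ c) :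
    ConcaveOn ℝ (Iic 0) fun t ↦ log (1 - (1 - exp t) ^ c) := by
  have hc0 : 0 < c := by linarith
  have hderiv : ∀ t ∈ interior (Iic (0 : ℝ)), HasDerivAt (fun t ↦ log (1 - (1 - exp t) ^ c))
      (c / (1 + ((1 - exp t) ^ (1 - c) - 1) / exp t)) t := by
    rw [interior_Iic]
    exact fun t ht ↦ hasDerivAt_log_one_sub_one_sub_exp_rpow hc0 ht
  refine AntitoneOn.concaveOn_of_deriv (convex_Iic 0) ?_
    (fun t ht ↦ (hderiv t ht).differentiableAt.differentiableWithinAt) ?_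
  · refine ContinuousOn.log (continuousOn_const.sub (ContinuousOn.rpow_const
      (continuousOn_const.sub continuous_exp.continuousOn) fun _ _ ↦ Or.inr hc0.le)) ?_
    exact fun t ht ↦ (one_sub_one_sub_rpow_pos_s13 hc0 (exp_pos t) (exp_le_one_iff.2 ht)).ne'
  · intro s hs t ht hst
    rw [(hderiv s hs).deriv, (hderiv t ht).deriv]
    rw [interior_Iic] at hs ht
    exact antitoneOn_div_one_add_one_sub_rpow_sub_one_div hc ⟨exp_pos s, exp_lt_one_iff.2 hs⟩
      ⟨exp_pos t, exp_lt_one_iff.2 ht⟩ (exp_le_exp.2 hst)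

lemma rpow_log_div_log_le_one_sub_one_sub_rpow {c κ x : ℝ} (hc : 1 ≤ c) (hκ0 : 0 < κ)
    (hκ1 : κ < 1) (hκx : κ ≤ x) (hx1 : x ≤ 1) :
    x ^ (log (1 - (1 - κ) ^ c) / log κ) ≤ 1 - (1 - x) ^ c := by
  have hc0 : 0 < c := by linarith
  have hx0 : 0 < x := hκ0.trans_le hκx
  have ha : log κ < 0 := log_neg hκ0 hκ1
  have ht : log κ ≤ log x := log_le_log hκ0 hκx
  have hw0 : 0 ≤ log x / log κ := div_nonneg_of_nonpos (log_nonpos hx0.le hx1) ha.le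
  have hw1 : log x / log κ ≤ 1 := (div_le_one_of_neg ha).2 ht
  have key := (concaveOn_log_one_sub_one_sub_exp_rpow hc).2 (mem_Iic.2 ha.le)
    (mem_Iic.2 le_rfl) hw0 (sub_nonneg.2 hw1) (add_sub_cancel _ _)
  simp only [smul_eq_mul, mul_zero, add_zero, exp_zero, sub_self, zero_rpow hc0.ne', exp_log hκ0,
    div_mul_cancel₀ _ ha.ne, exp_log hx0, sub_zero, log_one] at key
  rw [rpow_def_of_pos hx0, ← exp_log (one_sub_one_sub_rpow_pos_s13 hc0 hx0 hx1), exp_le_exp]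
  calc log x * (log (1 - (1 - κ) ^ c) / log κ)
      = log x / log κ * log (1 - (1 - κ) ^ c) := by ring
    _ ≤ log (1 - (1 - x) ^ c) := key

lemma log_one_sub_one_sub_rpow_div_log_mem_Icc {c κ : ℝ} (hc : 1 ≤ c) (hκ0 : 0 < κ)
    (hκ1 : κ < 1) : log (1 - (1 - κ) ^ c) / log κ ∈ Icc 0 1 := by
  have ha := log_neg hκ0 hκ1
  have hle : (1 - κ) ^ c ≤ 1 - κ := rpow_le_self_of_le_one (by linarith) (by linarith) hc
  have hpos : 0 ≤ (1 - κ) ^ c := rpow_nonneg (by linarith) c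
  exact ⟨div_nonneg_of_nonpos (log_nonpos (by linarith) (by linarith)) ha.le,
    (div_le_one_of_neg ha).2 (log_le_log hκ0 (by linarith))⟩

lemma lt_sqrt_sum_sq {ι : Type*} [Fintype ι] {s : ι → ℝ} {i j : ι} (hij : i ≠ j)
    (hi : 0 ≤ s i) (hj : s j ≠ 0) : s i < √(∑ k, s k ^ 2) := by
  classical
  rw [lt_sqrt hi]
  calc s i ^ 2 < s i ^ 2 + s j ^ 2 := lt_add_of_pos_right _ (by positivity)
    _ = ∑ k ∈ {i, j}, s k ^ 2 := (Finset.sum_pair (f := fun k ↦ s k ^ 2) hij).symm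
    _ ≤ ∑ k, s k ^ 2 := Finset.sum_le_sum_of_subset_of_nonneg (Finset.subset_univ _)
      fun k _ _ ↦ sq_nonneg (s k)

lemma one_le_sum_rpow_of_sum_sq_eq_one {ι : Type*} [Fintype ι] {x : ι → ℝ}
    (hx : ∀ i, 0 ≤ x i) (hsum : ∑ i, x i ^ 2 = 1) {p : ℝ} (hp0 : 0 ≤ p) (hp2 : p ≤ 2) :
    1 ≤ ∑ i, x i ^ p := by
  rw [← hsum]
  refine Finset.sum_le_sum fun i _ ↦ ?_
  have hx1 : x i ≤ 1 := by
    refine (sq_le_one_iff₀ (hx i)).1 ?_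
    exact hsum ▸ Finset.single_le_sum (fun j _ ↦ sq_nonneg (x j)) (Finset.mem_univ i)
  rw [← rpow_two]
  exact rpow_le_rpow_of_exponent_ge' (hx i) hx1 hp0 hp2

lemma rpow_sum_rpow_one_div_le {ι : Type*} [Fintype ι] {s : ι → ℝ} (hs : ∀ i, 0 ≤ s i)
    {F : ℝ} (hF : 0 < F) (hF2 : ∑ i, s i ^ 2 = F ^ 2) {p : ℝ} (hp1 : 1 ≤ p) (hp2 : p ≤ 2) :
    (∑ i, s i ^ p) ^ (1 / p) ≤ F * ∑ i, (s i / F) ^ p := by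
  set S := ∑ i, (s i / F) ^ p
  have hS : 1 ≤ S := by
    refine one_le_sum_rpow_of_sum_sq_eq_one (fun i ↦ div_nonneg (hs i) hF.le) ?_ (by linarith)
      hp2
    simp_rw [div_pow, ← Finset.sum_div, hF2]
    exact div_self (by positivity)
  have hsum : ∑ i, s i ^ p = F ^ p * S := by
    rw [Finset.mul_sum]
    refine Finset.sum_congr rfl fun i _ ↦ ?_
    rw [← mul_rpow hF.le (div_nonneg (hs i) hF.le), mul_div_cancel₀ _ hF.ne']
  calc (∑ i, s i ^ p) ^ (1 / p) = F * S ^ (1 / p) := by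
        rw [hsum, mul_rpow (by positivity) (by linarith), ← rpow_mul hF.le,
          mul_one_div_cancel (by linarith), rpow_one]
    _ ≤ F * S := by
        gcongr
        exact rpow_le_self_of_one_le hS ((div_le_one (by linarith)).2 hp1)

lemma rpow_sum_rpow_le_sum_mul_one_sub_one_sub_rpow {ι : Type*} [Fintype ι] {s : ι → ℝ}
    (hs : ∀ i, 0 < s i) {c F κ : ℝ} (hc : 1 ≤ c) (hF : 0 < F) (hF2 : ∑ i, s i ^ 2 = F ^ 2)
    (hκ0 : 0 < κ) (hκ1 : κ < 1) (hκ : ∀ i, κ ≤ s i / F) :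
    (∑ i, s i ^ (1 + log (1 - (1 - κ) ^ c) / log κ)) ^ (1 / (1 + log (1 - (1 - κ) ^ c) / log κ))
      ≤ ∑ i, s i * (1 - (1 - s i / F) ^ c) := by
  set q := log (1 - (1 - κ) ^ c) / log κ
  obtain ⟨hq0, hq1⟩ := log_one_sub_one_sub_rpow_div_log_mem_Icc hc hκ0 hκ1
  have hsF : ∀ i, s i / F ≤ 1 := fun i ↦ (div_le_one hF).2 <|
    (pow_le_pow_iff_left₀ (hs i).le hF.le two_ne_zero).1 <|
      hF2 ▸ Finset.single_le_sum (fun j _ ↦ sq_nonneg (s j)) (Finset.mem_univ i)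
  calc (∑ i, s i ^ (1 + q)) ^ (1 / (1 + q)) ≤ F * ∑ i, (s i / F) ^ (1 + q) :=
        rpow_sum_rpow_one_div_le (fun i ↦ (hs i).le) hF hF2 (by linarith) (by linarith)
    _ = ∑ i, s i * (s i / F) ^ q := by
        rw [Finset.mul_sum]
        refine Finset.sum_congr rfl fun i _ ↦ ?_
        rw [rpow_add (div_pos (hs i) hF), rpow_one]
        field_simp
    _ ≤ ∑ i, s i * (1 - (1 - s i / F) ^ c) :=
        Finset.sum_le_sum fun i _ ↦ mul_le_mul_of_nonneg_left
          (rpow_log_div_log_le_one_sub_one_sub_rpow hc hκ0 hκ1 (hκ i) (hsF i)) (hs i).le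

theorem inexact_lmo_scalar_core (T m : ℕ) (hm : 2 ≤ m) (s : Fin m → ℝ)
    (hs : ∀ i, 0 < s i)
    (c F κ p : ℝ)
    (hc : c = ((3 : ℝ) / 2) ^ T)
    (hF : F = Real.sqrt (∑ i, s i ^ 2))
    (hκdef : κ = (⨅ i, s i) / F)
    (hpdef : p = 1 + Real.log (1 - (1 - κ) ^ c) / Real.log κ) :
    0 < κ ∧ κ < 1 ∧
      ∑ i, s i * (1 - (1 - s i / F) ^ c) ≥ (∑ i, s i ^ p) ^ (1 / p) := by
  have : Nontrivial (Fin m) := Fin.nontrivial_iff_two_le.2 hm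
  obtain ⟨i₀, hi₀⟩ := Finite.exists_min s
  obtain ⟨j, hj⟩ := exists_ne i₀
  have hsF : s i₀ < F := hF ▸ lt_sqrt_sum_sq hj.symm (hs i₀).le (hs j).ne'
  have hF0 : 0 < F := (hs i₀).trans hsF
  have hF2 : ∑ i, s i ^ 2 = F ^ 2 := by
    rw [hF, sq_sqrt (Finset.sum_nonneg fun i _ ↦ sq_nonneg (s i))]
  have hκ : κ = s i₀ / F := by
    rw [hκdef, le_antisymm (ciInf_le (Finite.bddBelow_range s) i₀) (le_ciInf hi₀)]
  have hκ0 : 0 < κ := hκ ▸ div_pos (hs i₀) hF0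
  have hκ1 : κ < 1 := hκ ▸ (div_lt_one hF0).2 hsF
  refine ⟨hκ0, hκ1, hpdef ▸ rpow_sum_rpow_le_sum_mul_one_sub_one_sub_rpow hs
    (hc ▸ one_le_pow₀ (by norm_num)) hF0 hF2 hκ0 hκ1 fun i ↦ ?_⟩
  exact hκ ▸ div_le_div_of_nonneg_right (hi₀ i) hF0.le
end

section
/- Let G be a nonzero real m × n matrix and define the Newton–Schulz iterates by G₀ := G / ‖G‖_F and G_{t+1} := (15/8)·G_t − (5/4)·(G_t·G_tᵀ)·G_t + (3/8)·(G_t·G_tᵀ)·(G_t·G_tᵀ)·G_t. Then for every natural number T: ‖G‖_F ≤ trace(Gᵀ·G_T) ≤ ‖G‖_trace, where ‖G‖_trace := Σ_i σ_i(G) is the sum of the singular values of G. Equivalently, −‖G‖_trace ≤ ⟨G, −G_T⟩ ≤ −‖G‖_F, where ⟨A,B⟩ := trace(Aᵀ·B) is the Frobenius inner product. -/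
/-!
Let `c = ‖G‖_F` and diagonalise `GᵀG = U diag(λ) Uᵀ`. Every Newton–Schulz step maps a matrix of
the form `G · U diag(f) Uᵀ` to another one of that form, so `G_t = G · U diag(f_t) Uᵀ` and
`trace (Gᵀ G_t) = ∑ λᵢ f_t(λᵢ)`. On a singular value `σ = √λ` the multiplier satisfies
`σ f_t(σ²) = p^[t] (σ / c)` with `p x = 15/8 x - 5/4 x³ + 3/8 x⁵`, and `p` maps every
`x ∈ [0, 1]` into `[x, 1]`. Since `σ / c ≤ 1`, each term `λ f_t(λ) = σ · σ f_t(σ²)` lies between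
`σ² / c` and `σ`; summing gives `c = ∑ σ² / c ≤ trace (Gᵀ G_t) ≤ ∑ σ`.
-/

open Matrix

/-- The trace norm (nuclear norm) of a real matrix: the sum of its singular values,
the square roots of the eigenvalues of the positive semidefinite matrix `Aᵀ * A`. -/
noncomputable def traceNorm {m n : ℕ} (A : Matrix (Fin m) (Fin n) ℝ) : ℝ :=
  ∑ i, Real.sqrt
    ((show (Aᵀ * A).IsHermitian by
        simpa [Matrix.conjTranspose_eq_transpose_of_trivial] using
          Matrix.isHermitian_conjTranspose_mul_self A).eigenvalues i)

open Unitary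

noncomputable def newtonSchulzPoly (x : ℝ) : ℝ := 15 / 8 * x - 5 / 4 * x ^ 3 + 3 / 8 * x ^ 5

lemma le_newtonSchulzPoly {x : ℝ} (h0 : 0 ≤ x) (h1 : x ≤ 1) : x ≤ newtonSchulzPoly x := by
  unfold newtonSchulzPoly
  nlinarith [mul_nonneg h0 (sq_nonneg (1 - x ^ 2)), sq_nonneg x]

lemma newtonSchulzPoly_le_one {x : ℝ} (h0 : 0 ≤ x) (h1 : x ≤ 1) : newtonSchulzPoly x ≤ 1 := by
  unfold newtonSchulzPoly
  nlinarith [pow_nonneg (sub_nonneg.2 h1) 3, sq_nonneg x]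

lemma iterate_newtonSchulzPoly_mem_Icc {x : ℝ} (h0 : 0 ≤ x) (h1 : x ≤ 1) (t : ℕ) :
    newtonSchulzPoly^[t] x ∈ Set.Icc x 1 := by
  induction t with
  | zero => exact ⟨le_rfl, h1⟩
  | succ t ih =>
    rw [Function.iterate_succ_apply']
    exact ⟨ih.1.trans (le_newtonSchulzPoly (h0.trans ih.1) ih.2),
      newtonSchulzPoly_le_one (h0.trans ih.1) ih.2⟩

/-- The multiplier `f_t(λ)` with `G_t = G · f_t(GᵀG)` for the iteration started at `c⁻¹ G`. -/
noncomputable def newtonSchulzCoeff (c s : ℝ) : ℕ → ℝ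
  | 0 => c⁻¹
  | t + 1 =>
    15 / 8 * newtonSchulzCoeff c s t - 5 / 4 * newtonSchulzCoeff c s t ^ 3 * s
      + 3 / 8 * newtonSchulzCoeff c s t ^ 5 * s ^ 2

lemma mul_newtonSchulzCoeff_sq (c r : ℝ) (t : ℕ) :
    r * newtonSchulzCoeff c (r ^ 2) t = newtonSchulzPoly^[t] (r / c) := by
  induction t with
  | zero => simp [newtonSchulzCoeff, div_eq_mul_inv]
  | succ t ih =>
    rw [Function.iterate_succ_apply', ← ih, newtonSchulzCoeff, newtonSchulzPoly]
    ring

lemma newtonSchulzCoeff_bounds {c s : ℝ} (hc : 0 ≤ c) (hs : 0 ≤ s) (hsc : s ≤ c ^ 2) (t : ℕ) :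
    s / c ≤ s * newtonSchulzCoeff c s t ∧ s * newtonSchulzCoeff c s t ≤ √s := by
  obtain ⟨hlow, hhigh⟩ := iterate_newtonSchulzPoly_mem_Icc (by positivity)
    (div_le_one_of_le₀ ((Real.sqrt_le_left hc).2 hsc) hc) t
  rw [← mul_newtonSchulzCoeff_sq, Real.sq_sqrt hs] at hlow hhigh
  have hss : √s * √s = s := Real.mul_self_sqrt hs
  constructor
  · calc s / c = √s * (√s / c) := by rw [mul_div_assoc', hss]
      _ ≤ √s * (√s * newtonSchulzCoeff c s t) := by gcongr
      _ = s * newtonSchulzCoeff c s t := by rw [← mul_assoc, hss]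
  · calc s * newtonSchulzCoeff c s t = √s * (√s * newtonSchulzCoeff c s t) := by
          rw [← mul_assoc, hss]
      _ ≤ √s := mul_le_of_le_one_right (Real.sqrt_nonneg s) hhigh

section ConjDiagonal

variable {ι κ : Type*} [Fintype ι] [Fintype κ] [DecidableEq ι]

noncomputable def conjDiagonal (U : unitary (Matrix ι ι ℝ)) : (ι → ℝ) →ₐ[ℝ] Matrix ι ι ℝ :=
  (conjStarAlgAut ℝ _ U).toAlgEquiv.toAlgHom.comp (diagonalAlgHom ℝ)

variable (U : unitary (Matrix ι ι ℝ))

lemma conjDiagonal_apply (f : ι → ℝ) :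
    conjDiagonal U f = U * diagonal f * (U : Matrix ι ι ℝ)ᵀ := by
  simp [conjDiagonal, star_eq_conjTranspose]

lemma transpose_conjDiagonal (f : ι → ℝ) : (conjDiagonal U f)ᵀ = conjDiagonal U f := by
  simp [conjDiagonal_apply, Matrix.mul_assoc]

lemma trace_conjDiagonal (f : ι → ℝ) : trace (conjDiagonal U f) = ∑ i, f i := by
  rw [conjDiagonal_apply, trace_mul_cycle, ← conjTranspose_eq_transpose_of_trivial,
    ← star_eq_conjTranspose, coe_star_mul_self, Matrix.one_mul, trace_diagonal]

lemma Matrix.IsHermitian.eq_conjDiagonal {A : Matrix ι ι ℝ} (hA : A.IsHermitian) :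
    A = conjDiagonal hA.eigenvectorUnitary hA.eigenvalues := by
  simpa [conjDiagonal] using hA.spectral_theorem

variable {U} {G : Matrix κ ι ℝ} {l : ι → ℝ}

lemma mul_transpose_mul_conjDiagonal (hG : Gᵀ * G = conjDiagonal U l) (f g h : ι → ℝ) :
    G * conjDiagonal U f * (G * conjDiagonal U g)ᵀ * (G * conjDiagonal U h) =
      G * conjDiagonal U (f * g * l * h) := by
  simp only [transpose_mul, transpose_conjDiagonal, map_mul, Matrix.mul_assoc]
  rw [← Matrix.mul_assoc Gᵀ, hG]

lemma trace_transpose_mul_conjDiagonal (hG : Gᵀ * G = conjDiagonal U l) (f : ι → ℝ) :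
    trace (Gᵀ * (G * conjDiagonal U f)) = ∑ i, l i * f i := by
  rw [← Matrix.mul_assoc, hG, ← map_mul, trace_conjDiagonal, Pi.mul_def]

lemma newtonSchulz_iterate_eq_mul_conjDiagonal (hG : Gᵀ * G = conjDiagonal U l) (c : ℝ)
    (X : ℕ → Matrix κ ι ℝ) (h0 : X 0 = c⁻¹ • G)
    (hrec : ∀ t, X (t + 1) =
      (15 / 8 : ℝ) • X t
        - (5 / 4 : ℝ) • (X t * (X t)ᵀ * X t)
        + (3 / 8 : ℝ) • (X t * (X t)ᵀ * (X t * (X t)ᵀ) * X t)) (t : ℕ) :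
    X t = G * conjDiagonal U (fun i => newtonSchulzCoeff c (l i) t) := by
  induction t with
  | zero =>
    have hconst : (fun i => newtonSchulzCoeff c (l i) 0) = c⁻¹ • (1 : ι → ℝ) := by
      ext; simp [newtonSchulzCoeff]
    rw [h0, hconst, map_smul, map_one, Matrix.mul_smul, Matrix.mul_one]
  | succ t ih =>
    rw [hrec, ih, ← Matrix.mul_assoc _ _ (_ * _)ᵀ, mul_transpose_mul_conjDiagonal hG,
      mul_transpose_mul_conjDiagonal hG]
    simp only [← Matrix.mul_smul, ← Matrix.mul_sub, ← Matrix.mul_add, ← map_smul, ← map_sub,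
      ← map_add]
    congr 2
    ext i
    simp only [Pi.add_apply, Pi.sub_apply, Pi.smul_apply, Pi.mul_apply, smul_eq_mul,
      newtonSchulzCoeff]
    ring

end ConjDiagonal

lemma Matrix.trace_transpose_mul_self_eq_sum_sq {R m n : Type*} [CommSemiring R] [Fintype m]
    [Fintype n] (A : Matrix m n R) :
    trace (Aᵀ * A) = ∑ i, ∑ j, A i j ^ 2 := by
  simp only [trace, diag, mul_apply, transpose_apply, sq]
  exact Finset.sum_comm

theorem newton_schulz_alignment_bounds_general (m n : ℕ)
    (G : Matrix (Fin m) (Fin n) ℝ)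
    (Giter : ℕ → Matrix (Fin m) (Fin n) ℝ)
    (h0 : Giter 0 = (Real.sqrt (∑ i, ∑ j, G i j ^ 2))⁻¹ • G)
    (hrec : ∀ t, Giter (t + 1) =
      (15 / 8 : ℝ) • Giter t
        - (5 / 4 : ℝ) • (Giter t * (Giter t)ᵀ * Giter t)
        + (3 / 8 : ℝ) • (Giter t * (Giter t)ᵀ * (Giter t * (Giter t)ᵀ) * Giter t)) :
    ∀ T : ℕ,
      Real.sqrt (∑ i, ∑ j, G i j ^ 2) ≤ Matrix.trace (Gᵀ * Giter T) ∧
        Matrix.trace (Gᵀ * Giter T) ≤ traceNorm G := by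
  intro T
  set c := √(∑ i, ∑ j, G i j ^ 2)
  have hpsd : (Gᵀ * G).PosSemidef := by
    simpa [conjTranspose_eq_transpose_of_trivial] using posSemidef_conjTranspose_mul_self G
  set l := hpsd.isHermitian.eigenvalues
  have hGU := hpsd.isHermitian.eq_conjDiagonal
  have hl : ∀ i, 0 ≤ l i := hpsd.eigenvalues_nonneg
  have hsum_l : ∑ i, l i = c ^ 2 := by
    rw [← trace_conjDiagonal, ← hGU, trace_transpose_mul_self_eq_sum_sq,
      Real.sq_sqrt (by positivity)]
  have hl_le : ∀ i, l i ≤ c ^ 2 := fun i =>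
    hsum_l ▸ Finset.single_le_sum (fun j _ => hl j) (Finset.mem_univ i)
  have hbounds := fun i => newtonSchulzCoeff_bounds (Real.sqrt_nonneg _) (hl i) (hl_le i) T
  rw [newtonSchulz_iterate_eq_mul_conjDiagonal hGU c Giter h0 hrec T,
    trace_transpose_mul_conjDiagonal hGU]
  constructor
  · calc c = ∑ i, l i / c := by rw [← Finset.sum_div, hsum_l, sq, mul_self_div_self]
      _ ≤ _ := Finset.sum_le_sum fun i _ => (hbounds i).1
  · exact Finset.sum_le_sum fun i _ => (hbounds i).2

theorem newton_schulz_alignment_bounds (m n : ℕ)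
    (G : Matrix (Fin m) (Fin n) ℝ) (hG : G ≠ 0)
    (Giter : ℕ → Matrix (Fin m) (Fin n) ℝ)
    (h0 : Giter 0 = (Real.sqrt (∑ i, ∑ j, G i j ^ 2))⁻¹ • G)
    (hrec : ∀ t, Giter (t + 1) =
      (15 / 8 : ℝ) • Giter t
        - (5 / 4 : ℝ) • (Giter t * (Giter t)ᵀ * Giter t)
        + (3 / 8 : ℝ) • (Giter t * (Giter t)ᵀ * (Giter t * (Giter t)ᵀ) * Giter t)) :
    ∀ T : ℕ,
      Real.sqrt (∑ i, ∑ j, G i j ^ 2) ≤ Matrix.trace (Gᵀ * Giter T) ∧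
        Matrix.trace (Gᵀ * Giter T) ≤ traceNorm G :=
  newton_schulz_alignment_bounds_general m n G Giter h0 hrec
end
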